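/- arXiv:2506.00451 — 4 statements merged into one kernel-verified Lean document; each statement's English description precedes it below -/
import Mathlib

section
/- (Algebraic form of Lemma 1.3 / Lemma A.1, the key combinatorial lemma.) Suppose g : α → α → R and t : α → R satisfy, for all indices i ≠ j in {1, …, k} and all labels u ∈ {a_i, b_i}, v ∈ {a_j, b_j}, the relation g(u,v) + g(v,u) = −(2t(u) − 1)(2t(v) − 1). Define f : α → α → R by f(u,v) = g(u,v) − g(v,u). Then W_f((a_1,b_1), …, (a_k,b_k)) = 2^k · W_g((a_1,b_1), …, (a_k,b_k)). -/
/-- The sign of a Boolean: `true ↦ 1`, `false ↦ -1` (encoding `ε ∈ {1, -1}`). -/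
def signR (R : Type*) [CommRing R] (e : Bool) : R := if e then 1 else -1

/-- `B_i(ε)`: the second component `b_i` if `ε = 1`, the first component `a_i` if `ε = -1`. -/
def Bc {α : Type*} (q : α × α) (e : Bool) : α := if e then q.2 else q.1

/-- `A_i(ε)`: the first component `a_i` if `ε = 1`, the second component `b_i` if `ε = -1`. -/
def Ac {α : Type*} (q : α × α) (e : Bool) : α := if e then q.1 else q.2

/-- `W_h((a_1,b_1), …, (a_k,b_k)) = Σ_{ε ∈ {1,−1}^k} Σ_{σ ∈ S'_k} ∏_{i=1}^k
ε_{σ(i)} · h(B_{σ(i)}(ε_{σ(i)}), A_{σ(i+1)}(ε_{σ(i+1)}))`, where `S'_k` is the set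
of permutations fixing the first index, and indices are cyclic (`σ(k+1) := σ(1)`). -/
def Wsum {R α : Type*} [CommRing R] (h : α → α → R) {k : ℕ} (p : Fin k → α × α) : R :=
  ∑ ε : Fin k → Bool,
    ∑ σ ∈ Finset.univ.filter (fun σ : Equiv.Perm (Fin k) => ∀ i : Fin k, (i : ℕ) = 0 → σ i = i),
      ∏ i : Fin k,
        signR R (ε (σ i)) * h (Bc (p (σ i)) (ε (σ i))) (Ac (p (σ (finRotate k i))) (ε (σ (finRotate k i))))


/-!
On labels of distinct indices the hypothesis reads `2 g = f - S ⊗ S` with `S = 2t - 1`, and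
`f` is antisymmetric. So it suffices to show that adding a symmetric rank-one kernel `μ S ⊗ S` to an
antisymmetric kernel `h` does not change `W`.

Expand `∏ (h + μ S ⊗ S)` over the set `Q` of positions of the cycle whose edge carries the
rank-one factor. If `Q` has two consecutive elements `c < d`, reversing the block of vertices at
positions `c + 1, …, d` and flipping their orientations negates the term: each of the `d - c - 1`
interior edges changes sign by antisymmetry, each of the `d - c` orientation flips contributes a
sign, and the two rank-one edges only exchange endpoints. If `Q = {c}`, reflecting the whole
cycle about the pinned vertex matches the terms for `{c}` and `{-c - 1}` with opposite signs. Both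
pairings are fixed-point-free involutions, so only the term `Q = ∅`, which is `W_h`, survives.
-/

open Finset Function

section

variable {R α : Type*}

lemma signR_not [CommRing R] (e : Bool) : signR R (!e) = -signR R e := by
  cases e <;> simp [signR]

lemma Bc_not (q : α × α) (e : Bool) : Bc q (!e) = Ac q e := by
  cases e <;> rfl

lemma Ac_not (q : α × α) (e : Bool) : Ac q (!e) = Bc q e := by
  cases e <;> rfl

lemma Bc_eq_or (q : α × α) (e : Bool) : Bc q e = q.1 ∨ Bc q e = q.2 := by
  cases e <;> simp [Bc]

lemma Ac_eq_or (q : α × α) (e : Bool) : Ac q e = q.1 ∨ Ac q e = q.2 := by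
  cases e <;> simp [Ac]

section Wsum

variable [CommRing R] {k : ℕ}

lemma Wsum_fin_zero (h : α → α → R) (p : Fin 0 → α × α) : Wsum h p = 1 := by
  simp [Wsum]

lemma Wsum_fin_one (h : α → α → R) (p : Fin 1 → α × α) :
    Wsum h p = h (p 0).2 (p 0).1 - h (p 0).1 (p 0).2 := by
  rw [Wsum, ← (Equiv.funUnique (Fin 1) Bool).symm.sum_comp]
  simp [signR, Bc, Ac, filter_singleton, sub_eq_neg_add, add_comm]

lemma Wsum_const_mul (c : R) (h : α → α → R) (p : Fin k → α × α) :
    Wsum (fun u v => c * h u v) p = c ^ k * Wsum h p := by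
  simp only [Wsum, mul_sum, mul_left_comm _ c, prod_mul_distrib, prod_const, card_univ,
    Fintype.card_fin]

lemma Wsum_congr (hk : k ≠ 1) {p : Fin k → α × α} {h₁ h₂ : α → α → R}
    (H : ∀ i j, i ≠ j → ∀ u v, (u = (p i).1 ∨ u = (p i).2) → (v = (p j).1 ∨ v = (p j).2) →
      h₁ u v = h₂ u v) :
    Wsum h₁ p = Wsum h₂ p := by
  have hrot : ∀ i : Fin k, i ≠ finRotate k i := by
    obtain _ | _ | n := k
    · exact fun i => i.elim0
    · exact absurd rfl hk
    · intro i
      simp [finRotate_apply]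
  refine sum_congr rfl fun ε _ => sum_congr rfl fun σ _ => prod_congr rfl fun i _ => ?_
  rw [H _ _ (σ.injective.ne (hrot i)) _ _ (Bc_eq_or _ _) (Ac_eq_or _ _)]

end Wsum

lemma Fin.val_add_one_eq_ite {n : ℕ} (i : Fin (n + 1)) :
    ((i + 1 : Fin (n + 1)) : ℕ) = if (i : ℕ) = n then 0 else (i : ℕ) + 1 := by
  rw [Fin.val_add_one]
  simp only [Fin.ext_iff, Fin.val_last]

lemma Finset.Nontrivial.exists_consecutive {β : Type*} [LinearOrder β] {Q : Finset β}
    (hQ : Q.Nontrivial) : ∃ c ∈ Q, ∃ d ∈ Q, c < d ∧ ∀ j ∈ Q, ¬(c < j ∧ j < d) := by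
  set d := Q.max' hQ.nonempty
  have hc : (Q.erase d).max' hQ.erase_nonempty ∈ Q.erase d := max'_mem _ _
  refine ⟨_, mem_of_mem_erase hc, d, Q.max'_mem _,
    (Q.le_max' _ (mem_of_mem_erase hc)).lt_of_ne (ne_of_mem_erase hc), ?_⟩
  rintro j hj ⟨hcj, hjd⟩
  exact hcj.not_ge ((Q.erase d).le_max' j (mem_erase.mpr ⟨hjd.ne, hj⟩))

lemma prod_eq_mul_prod_Ioo_mul_prod_compl_Icc {M : Type*} [CommMonoid M] {n : ℕ}
    {c d : Fin (n + 1)} (hcd : c < d) (F : Fin (n + 1) → M) :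
    ∏ i, F i = F c * F d * (∏ i ∈ Ioo c d, F i) * ∏ i ∈ (Icc c d)ᶜ, F i := by
  rw [← prod_mul_prod_compl (Icc c d), ← Ioc_insert_left hcd.le, ← Ioo_insert_right hcd,
    prod_insert (by simp [hcd.ne]), prod_insert (by simp)]
  simp only [mul_assoc]

section Positions

variable {n : ℕ}

def permsFixingZero (k : ℕ) : Finset (Equiv.Perm (Fin k)) :=
  univ.filter fun σ => ∀ i : Fin k, (i : ℕ) = 0 → σ i = i

lemma mem_permsFixingZero {σ : Equiv.Perm (Fin (n + 1))} :
    σ ∈ permsFixingZero (n + 1) ↔ σ 0 = 0 := by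
  simp only [permsFixingZero, mem_filter, mem_univ, true_and]
  exact ⟨fun h => h 0 rfl, fun h i hi => (Fin.ext hi : i = 0) ▸ h⟩

def reorient (τ : Equiv.Perm (Fin (n + 1))) (B : Finset (Fin (n + 1))) (δ : Fin (n + 1) → Bool)
    (i : Fin (n + 1)) : Bool :=
  if i ∈ B then !δ (τ i) else δ (τ i)

lemma reorient_reorient {τ : Equiv.Perm (Fin (n + 1))} (hτ : Involutive τ)
    {B : Finset (Fin (n + 1))} (hBτ : ∀ i, τ i ∈ B ↔ i ∈ B) (δ : Fin (n + 1) → Bool) :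
    reorient τ B (reorient τ B δ) = δ := by
  funext i
  by_cases hi : i ∈ B <;> simp [reorient, hBτ, hτ i, hi]

variable {c d i : Fin (n + 1)}

def segmentRevFun (c d i : Fin (n + 1)) : Fin (n + 1) :=
  if h : c < i ∧ i ≤ d then ⟨c + d + 1 - i, by omega⟩ else i

lemma val_segmentRevFun (c d i : Fin (n + 1)) :
    (segmentRevFun c d i : ℕ) = if c < i ∧ i ≤ d then (c : ℕ) + d + 1 - i else i := by
  unfold segmentRevFun
  split_ifs <;> rfl

lemma segmentRevFun_involutive (c d : Fin (n + 1)) : Involutive (segmentRevFun c d) := by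
  intro i
  simp only [Fin.ext_iff, val_segmentRevFun, Fin.lt_def, Fin.le_def]
  split_ifs <;> omega

def segmentReversal (c d : Fin (n + 1)) : Equiv.Perm (Fin (n + 1)) :=
  (segmentRevFun_involutive c d).toPerm

lemma segmentReversal_involutive (c d : Fin (n + 1)) : Involutive (segmentReversal c d) :=
  segmentRevFun_involutive c d

lemma val_segmentReversal (c d i : Fin (n + 1)) :
    (segmentReversal c d i : ℕ) = if c < i ∧ i ≤ d then (c : ℕ) + d + 1 - i else i :=
  val_segmentRevFun c d i

lemma segmentReversal_of_notMem (hi : i ∉ Ioc c d) : segmentReversal c d i = i := by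
  rw [mem_Ioc] at hi
  simp only [Fin.ext_iff, val_segmentReversal, if_neg hi]

lemma segmentReversal_mem_Ioc_iff : segmentReversal c d i ∈ Ioc c d ↔ i ∈ Ioc c d := by
  simp only [mem_Ioc, Fin.lt_def, Fin.le_def, val_segmentReversal]
  split_ifs <;> omega

lemma segmentReversal_zero : segmentReversal c d 0 = 0 :=
  segmentReversal_of_notMem (by simp)

lemma segmentReversal_apply_add_one_left (hcd : c < d) : segmentReversal c d (c + 1) = d := by
  have := Fin.val_add_one_eq_ite c
  simp only [Fin.ext_iff, val_segmentReversal, Fin.lt_def, Fin.le_def] at *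
  split_ifs at * <;> omega

lemma segmentReversal_apply_right (hcd : c < d) : segmentReversal c d d = c + 1 := by
  have := Fin.val_add_one_eq_ite c
  simp only [Fin.ext_iff, val_segmentReversal, Fin.lt_def, Fin.le_def] at *
  split_ifs at * <;> omega

lemma segmentReversal_of_mem_Ioo (hi : i ∈ Ioo c d) :
    segmentReversal c d i = segmentReversal c d (i + 1) + 1 := by
  have := Fin.val_add_one_eq_ite i
  have := Fin.val_add_one_eq_ite (segmentReversal c d (i + 1))
  simp only [mem_Ioo, Fin.ext_iff, val_segmentReversal, Fin.lt_def, Fin.le_def] at *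
  split_ifs at * <;> omega

lemma segmentReversal_add_one_mem_Ioo (hi : i ∈ Ioo c d) :
    segmentReversal c d (i + 1) ∈ Ioo c d := by
  have := Fin.val_add_one_eq_ite i
  simp only [mem_Ioo, Fin.lt_def, val_segmentReversal, Fin.le_def] at hi ⊢
  split_ifs at * <;> omega

lemma add_one_mem_Ioc (hci : c ≤ i) (hid : i < d) : i + 1 ∈ Ioc c d := by
  have := Fin.val_add_one_eq_ite i
  simp only [mem_Ioc, Fin.lt_def, Fin.le_def] at *
  split_ifs at * <;> omega

lemma add_one_notMem_Ioc (hi : i ∉ Icc c d) : i + 1 ∉ Ioc c d := by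
  have := Fin.val_add_one_eq_ite i
  simp only [mem_Ioc, mem_Icc, Fin.lt_def, Fin.le_def] at hi ⊢
  split_ifs at this <;> omega

lemma add_one_right_notMem_Ioc : d + 1 ∉ Ioc c d := by
  have := Fin.val_add_one_eq_ite d
  simp only [mem_Ioc, Fin.lt_def, Fin.le_def]
  split_ifs at this <;> omega

end Positions

section EdgeWeight

variable {n : ℕ}

/-- `δ i` is the orientation `ε_{σ(i)}` of the vertex at position `i` of the cycle `σ`. -/
def edgeWeight (h : α → α → R) (p : Fin (n + 1) → α × α) (σ : Equiv.Perm (Fin (n + 1)))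
    (δ : Fin (n + 1) → Bool) (i : Fin (n + 1)) : R :=
  h (Bc (p (σ i)) (δ i)) (Ac (p (σ (i + 1))) (δ (i + 1)))

variable (h : α → α → R) (p : Fin (n + 1) → α × α) (σ : Equiv.Perm (Fin (n + 1)))
  (δ : Fin (n + 1) → Bool) {c d i : Fin (n + 1)}

lemma edgeWeight_segmentReversal_of_notMem (hi : i ∉ Icc c d) :
    edgeWeight h p (σ * segmentReversal c d) (reorient (segmentReversal c d) (Ioc c d) δ) i =
      edgeWeight h p σ δ i := by
  have hi' : i ∉ Ioc c d := fun h => hi (Ioc_subset_Icc_self h)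
  simp [edgeWeight, reorient, hi', add_one_notMem_Ioc hi, segmentReversal_of_notMem]

lemma edgeWeight_segmentReversal_left (hcd : c < d) :
    edgeWeight h p (σ * segmentReversal c d) (reorient (segmentReversal c d) (Ioc c d) δ) c =
      h (Bc (p (σ c)) (δ c)) (Bc (p (σ d)) (δ d)) := by
  have hc : c ∉ Ioc c d := by simp
  simp [edgeWeight, reorient, hc, add_one_mem_Ioc le_rfl hcd,
    segmentReversal_apply_add_one_left hcd, segmentReversal_of_notMem hc, Ac_not]

lemma edgeWeight_segmentReversal_right (hcd : c < d) :
    edgeWeight h p (σ * segmentReversal c d) (reorient (segmentReversal c d) (Ioc c d) δ) d =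
      h (Ac (p (σ (c + 1))) (δ (c + 1))) (Ac (p (σ (d + 1))) (δ (d + 1))) := by
  have hd1 : d + 1 ∉ Ioc c d := add_one_right_notMem_Ioc
  simp [edgeWeight, reorient, hcd, hd1, segmentReversal_apply_right hcd,
    segmentReversal_of_notMem hd1, Bc_not]

lemma edgeWeight_segmentReversal_of_mem_Ioo (hi : i ∈ Ioo c d) :
    edgeWeight h p (σ * segmentReversal c d) (reorient (segmentReversal c d) (Ioc c d) δ) i =
      edgeWeight (swap h) p σ δ (segmentReversal c d (i + 1)) := by
  have hi' := mem_Ioo.mp hi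
  simp [edgeWeight, reorient, hi'.1, hi'.2.le, add_one_mem_Ioc hi'.1.le hi'.2,
    segmentReversal_of_mem_Ioo hi, Bc_not, Ac_not]

lemma edgeWeight_reflection (i : Fin (n + 1)) :
    edgeWeight h p (σ * Equiv.neg _) (reorient (Equiv.neg _) univ δ) i =
      edgeWeight (swap h) p σ δ (-i - 1) := by
  have h₁ : -(i + 1) = -i - 1 := neg_add' i 1
  have h₂ : -i - 1 + 1 = -i := sub_add_cancel _ _
  simp only [edgeWeight, reorient, Equiv.Perm.mul_apply, Equiv.neg_apply, mem_univ, if_true,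
    Bc_not, Ac_not, swap, h₁, h₂]

end EdgeWeight

section Expansion

variable [CommRing R] {n : ℕ}

variable (R) in
def orientationSign {k : ℕ} (δ : Fin k → Bool) : R := ∏ i, signR R (δ i)

lemma orientationSign_reorient (τ : Equiv.Perm (Fin (n + 1))) (B : Finset (Fin (n + 1)))
    (δ : Fin (n + 1) → Bool) :
    orientationSign R (reorient τ B δ) = (-1) ^ #B * orientationSign R δ := by
  have hsign : ∀ i, signR R (reorient τ B δ i) =
      (if i ∈ B then -1 else 1) * signR R (δ (τ i)) := fun i => by
    by_cases hi : i ∈ B <;> simp [reorient, hi, signR_not]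
  simp only [orientationSign, hsign, prod_mul_distrib, prod_ite_mem, univ_inter, prod_const,
    Equiv.prod_comp τ (fun i => signR R (δ i))]

lemma edgeWeight_neg (h : α → α → R) (p : Fin (n + 1) → α × α) (σ : Equiv.Perm (Fin (n + 1)))
    (δ : Fin (n + 1) → Bool) (i : Fin (n + 1)) :
    edgeWeight (-h) p σ δ i = -edgeWeight h p σ δ i := rfl

lemma Wsum_eq_sum_edgeWeight (h : α → α → R) (p : Fin (n + 1) → α × α) :
    Wsum h p = ∑ σ ∈ permsFixingZero (n + 1), ∑ δ,
      orientationSign R δ * ∏ i, edgeWeight h p σ δ i := by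
  rw [Wsum, sum_comm]
  refine sum_congr rfl fun σ _ => Fintype.sum_equiv (σ.symm.arrowCongr (Equiv.refl Bool)) _ _
    fun ε => ?_
  simp [orientationSign, edgeWeight, prod_mul_distrib, finRotate_apply]

def splitTerm (h₀ h₁ : α → α → R) (p : Fin (n + 1) → α × α) (Q : Finset (Fin (n + 1)))
    (σ : Equiv.Perm (Fin (n + 1))) (δ : Fin (n + 1) → Bool) : R :=
  orientationSign R δ * ∏ i, if i ∈ Q then edgeWeight h₁ p σ δ i else edgeWeight h₀ p σ δ i

lemma Wsum_add_eq_sum_splitTerm (h₀ h₁ : α → α → R) (p : Fin (n + 1) → α × α) :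
    Wsum (h₀ + h₁) p = ∑ Q, ∑ σ ∈ permsFixingZero (n + 1), ∑ δ, splitTerm h₀ h₁ p Q σ δ := by
  have hterm : ∀ σ δ, orientationSign R δ * ∏ i, edgeWeight (h₀ + h₁) p σ δ i =
      ∑ Q, splitTerm h₀ h₁ p Q σ δ := fun σ δ => by
    have hsplit : ∀ i, edgeWeight (h₀ + h₁) p σ δ i =
        edgeWeight h₁ p σ δ i + edgeWeight h₀ p σ δ i := fun i => add_comm _ _
    rw [prod_congr rfl fun i _ => hsplit i, Fintype.prod_add, mul_sum]
    refine sum_congr rfl fun Q _ => ?_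
    rw [splitTerm, ← prod_mul_prod_compl Q]
    congr 2 <;> refine prod_congr rfl fun i hi => ?_
    · rw [if_pos hi]
    · rw [if_neg (mem_compl.mp hi)]
  calc Wsum (h₀ + h₁) p
      = ∑ σ ∈ permsFixingZero (n + 1), ∑ δ, ∑ Q, splitTerm h₀ h₁ p Q σ δ := by
        simp only [Wsum_eq_sum_edgeWeight, hterm]
    _ = ∑ σ ∈ permsFixingZero (n + 1), ∑ Q, ∑ δ, splitTerm h₀ h₁ p Q σ δ :=
        sum_congr rfl fun σ _ => sum_comm
    _ = _ := sum_comm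

lemma sum_splitTerm_empty (h₀ h₁ : α → α → R) (p : Fin (n + 1) → α × α) :
    ∑ σ ∈ permsFixingZero (n + 1), ∑ δ, splitTerm h₀ h₁ p ∅ σ δ = Wsum h₀ p := by
  simp [splitTerm, Wsum_eq_sum_edgeWeight]

/-- The involution `(x, σ, δ) ↦ (ρ x, σ τ, reorient τ B δ)` has no fixed points because `B` is
nonempty. -/
lemma sum_permsFixingZero_eq_zero {X : Type*} (s : Finset X) {ρ : X → X} (hρ : Involutive ρ)
    (hρs : ∀ x ∈ s, ρ x ∈ s) {τ : Equiv.Perm (Fin (n + 1))} (hτ : Involutive τ) (hτ0 : τ 0 = 0)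
    {B : Finset (Fin (n + 1))} (hB : B.Nonempty) (hBτ : ∀ i, τ i ∈ B ↔ i ∈ B)
    (F : X → Equiv.Perm (Fin (n + 1)) → (Fin (n + 1) → Bool) → R)
    (hF : ∀ x ∈ s, ∀ σ δ, F (ρ x) (σ * τ) (reorient τ B δ) = -F x σ δ) :
    ∑ x ∈ s, ∑ σ ∈ permsFixingZero (n + 1), ∑ δ, F x σ δ = 0 := by
  have hττ : τ * τ = 1 := Equiv.ext hτ
  simp only [← sum_product']
  refine sum_involution (fun y _ => (ρ y.1, y.2.1 * τ, reorient τ B y.2.2))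
    (fun y hy => by rw [hF _ (mem_product.mp hy).1, add_neg_cancel]) (fun y _ _ hy => ?_)
    (fun y hy => ?_) (fun y _ => by simp [hρ y.1, mul_assoc, hττ, reorient_reorient hτ hBτ])
  · obtain ⟨i, hi⟩ := hB
    have hτ1 : τ = 1 := mul_eq_left.mp (congrArg (fun y => y.2.1) hy)
    have hδ := congrFun (congrArg (fun y => y.2.2) hy) i
    simp [reorient, hi, hτ1] at hδ
  · simp only [mem_product, mem_univ, and_true, mem_permsFixingZero] at hy ⊢
    exact ⟨hρs _ hy.1, by simp [hτ0, hy.2]⟩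

end Expansion

section Cancellation

variable [CommRing R] {n : ℕ}

def rankOne (μ : R) (s : α → R) : α → α → R := fun u v => μ * (s u * s v)

lemma swap_rankOne (μ : R) (s : α → R) : swap (rankOne μ s) = rankOne μ s := by
  funext u v
  simp only [swap, rankOne, mul_comm (s v)]

variable {c d : Fin (n + 1)} (p : Fin (n + 1) → α × α) (σ : Equiv.Perm (Fin (n + 1)))
  (δ : Fin (n + 1) → Bool)

lemma edgeWeight_rankOne_segmentReversal (μ : R) (s : α → R) (hcd : c < d) :
    edgeWeight (rankOne μ s) p (σ * segmentReversal c d)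
        (reorient (segmentReversal c d) (Ioc c d) δ) c *
      edgeWeight (rankOne μ s) p (σ * segmentReversal c d)
        (reorient (segmentReversal c d) (Ioc c d) δ) d =
      edgeWeight (rankOne μ s) p σ δ c * edgeWeight (rankOne μ s) p σ δ d := by
  rw [edgeWeight_segmentReversal_left _ _ _ _ hcd, edgeWeight_segmentReversal_right _ _ _ _ hcd]
  simp only [rankOne, edgeWeight]
  ring

lemma prod_Ioo_edgeWeight_segmentReversal {h : α → α → R} (hanti : swap h = -h) :
    ∏ i ∈ Ioo c d, edgeWeight h p (σ * segmentReversal c d)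
        (reorient (segmentReversal c d) (Ioc c d) δ) i =
      (-1) ^ #(Ioo c d) * ∏ i ∈ Ioo c d, edgeWeight h p σ δ i := by
  have hinv : ∀ i ∈ Ioo c d, segmentReversal c d (segmentReversal c d (i + 1) + 1) = i :=
    fun i hi => by rw [← segmentReversal_of_mem_Ioo hi, segmentReversal_involutive]
  rw [← prod_const, ← prod_mul_distrib]
  refine prod_nbij' (fun i => segmentReversal c d (i + 1)) (fun i => segmentReversal c d (i + 1))
    (fun _ hi => segmentReversal_add_one_mem_Ioo hi)
    (fun _ hi => segmentReversal_add_one_mem_Ioo hi) hinv hinv fun i hi => ?_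
  rw [edgeWeight_segmentReversal_of_mem_Ioo _ _ _ _ hi, hanti, edgeWeight_neg, neg_one_mul]

variable {h₀ : α → α → R} (μ : R) (s : α → R)

lemma splitTerm_segmentReversal (hanti : swap h₀ = -h₀) {Q : Finset (Fin (n + 1))}
    (hcd : c < d) (hc : c ∈ Q) (hd : d ∈ Q) (hgap : ∀ i ∈ Ioo c d, i ∉ Q) :
    splitTerm h₀ (rankOne μ s) p Q (σ * segmentReversal c d)
        (reorient (segmentReversal c d) (Ioc c d) δ) =
      -splitTerm h₀ (rankOne μ s) p Q σ δ := by
  have hout : ∀ i ∈ (Icc c d)ᶜ,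
      (if i ∈ Q then edgeWeight (rankOne μ s) p (σ * segmentReversal c d)
          (reorient (segmentReversal c d) (Ioc c d) δ) i
        else edgeWeight h₀ p (σ * segmentReversal c d)
          (reorient (segmentReversal c d) (Ioc c d) δ) i) =
      if i ∈ Q then edgeWeight (rankOne μ s) p σ δ i else edgeWeight h₀ p σ δ i :=
    fun i hi => by simp only [edgeWeight_segmentReversal_of_notMem _ _ _ _ (mem_compl.mp hi)]
  have hcard : #(Ioc c d) = #(Ioo c d) + 1 := by
    simp only [Fin.card_Ioc, Fin.card_Ioo]
    omega
  have hsq : ((-1 : R) ^ #(Ioo c d)) * (-1) ^ #(Ioo c d) = 1 := by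
    rw [← mul_pow, neg_one_mul, neg_neg, one_pow]
  simp only [splitTerm, orientationSign_reorient, prod_eq_mul_prod_Ioo_mul_prod_compl_Icc hcd,
    if_pos hc, if_pos hd, prod_ite_of_false hgap, edgeWeight_rankOne_segmentReversal _ _ _ _ _ hcd,
    prod_Ioo_edgeWeight_segmentReversal _ _ _ hanti, prod_congr rfl hout, hcard, pow_succ]
  linear_combination (-(orientationSign R δ *
    (edgeWeight (rankOne μ s) p σ δ c * edgeWeight (rankOne μ s) p σ δ d *
      (∏ i ∈ Ioo c d, edgeWeight h₀ p σ δ i) *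
      ∏ i ∈ (Icc c d)ᶜ, if i ∈ Q then edgeWeight (rankOne μ s) p σ δ i
        else edgeWeight h₀ p σ δ i))) * hsq

lemma sum_splitTerm_eq_zero_of_nontrivial (hanti : swap h₀ = -h₀) {Q : Finset (Fin (n + 1))}
    (hQ : Q.Nontrivial) :
    ∑ σ ∈ permsFixingZero (n + 1), ∑ δ, splitTerm h₀ (rankOne μ s) p Q σ δ = 0 := by
  obtain ⟨c, hc, d, hd, hcd, hgap⟩ := hQ.exists_consecutive
  simpa using sum_permsFixingZero_eq_zero {Q} (ρ := id) (fun _ => rfl) (by simp)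
    (segmentReversal_involutive c d) segmentReversal_zero ⟨d, by simp [hcd]⟩
    (fun i => segmentReversal_mem_Ioc_iff) (splitTerm h₀ (rankOne μ s) p)
    (fun Q' hQ' σ δ => by
      rw [mem_singleton.mp hQ']
      exact splitTerm_segmentReversal p σ δ μ s hanti hcd hc hd
        fun i hi hiQ => hgap i hiQ (mem_Ioo.mp hi))

lemma splitTerm_reflection (hanti : swap h₀ = -h₀) (c : Fin (n + 1)) :
    splitTerm h₀ (rankOne μ s) p {c} (σ * Equiv.neg _) (reorient (Equiv.neg _) univ δ) =
      -splitTerm h₀ (rankOne μ s) p {-c - 1} σ δ := by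
  have hedge : ∀ i, (if i ∈ ({c} : Finset _) then edgeWeight (rankOne μ s) p σ δ (-i - 1)
        else edgeWeight (swap h₀) p σ δ (-i - 1)) =
      (if -i - 1 ∈ ({-c - 1} : Finset _) then 1 else -1) *
        if -i - 1 ∈ ({-c - 1} : Finset _) then edgeWeight (rankOne μ s) p σ δ (-i - 1)
        else edgeWeight h₀ p σ δ (-i - 1) := by
    intro i
    by_cases hi : i = c
    · simp [hi]
    · have : -i - 1 ≠ -c - 1 := by simpa using hi
      simp [hi, this, hanti, edgeWeight_neg]
  have hsigns : ∏ j : Fin (n + 1), (if j ∈ ({-c - 1} : Finset _) then 1 else -1 : R) =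
      (-1) ^ n := by
    simp [prod_ite, filter_ne']
  have hprod : ∏ i, (if i ∈ ({c} : Finset _) then
        edgeWeight (rankOne μ s) p (σ * Equiv.neg _) (reorient (Equiv.neg _) univ δ) i
        else edgeWeight h₀ p (σ * Equiv.neg _) (reorient (Equiv.neg _) univ δ) i) =
      (-1) ^ n * ∏ j, if j ∈ ({-c - 1} : Finset _) then edgeWeight (rankOne μ s) p σ δ j
        else edgeWeight h₀ p σ δ j := by
    rw [← hsigns, ← prod_mul_distrib]
    refine Fintype.prod_equiv ((Equiv.neg _).trans (Equiv.subRight 1)) _ _ fun i => ?_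
    rw [edgeWeight_reflection, edgeWeight_reflection, swap_rankOne, hedge]
    rfl
  have hsq : ((-1 : R) ^ n) * (-1) ^ n = 1 := by
    rw [← mul_pow, neg_one_mul, neg_neg, one_pow]
  simp only [splitTerm, orientationSign_reorient, hprod, card_univ, Fintype.card_fin, pow_succ]
  linear_combination (-(orientationSign R δ * ∏ j, if j ∈ ({-c - 1} : Finset _) then
    edgeWeight (rankOne μ s) p σ δ j else edgeWeight h₀ p σ δ j)) * hsq

lemma sum_splitTerm_singleton_eq_zero (hanti : swap h₀ = -h₀) :
    ∑ c, ∑ σ ∈ permsFixingZero (n + 1), ∑ δ, splitTerm h₀ (rankOne μ s) p {c} σ δ = 0 := by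
  have hρ : Involutive fun c : Fin (n + 1) => -c - 1 := fun c => by simp
  refine sum_permsFixingZero_eq_zero univ hρ (by simp) (τ := Equiv.neg _) neg_neg (by simp)
    univ_nonempty (by simp) _ fun c _ σ δ => ?_
  rw [splitTerm_reflection p σ δ μ s hanti, show -(-c - 1) - 1 = c from hρ c]

end Cancellation

theorem Wsum_add_rankOne [CommRing R] {k : ℕ} {h₀ : α → α → R} (hanti : swap h₀ = -h₀) (μ : R)
    (s : α → R) (p : Fin k → α × α) :
    Wsum (h₀ + rankOne μ s) p = Wsum h₀ p := by
  obtain _ | n := k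
  · simp only [Wsum_fin_zero]
  set small : Finset (Finset (Fin (n + 1))) :=
    insert ∅ (univ.map ⟨singleton, singleton_injective⟩)
  have hlarge : ∀ Q ∉ small, Q.Nontrivial := fun Q hQ => by
    simp only [small, mem_insert, mem_map, mem_univ, true_and, Embedding.coeFn_mk, not_or,
      not_exists] at hQ
    exact (nonempty_iff_ne_empty.mpr hQ.1).exists_eq_singleton_or_nontrivial.resolve_left
      fun ⟨c, hc⟩ => hQ.2 c hc.symm
  rw [Wsum_add_eq_sum_splitTerm, ← sum_subset (subset_univ small)
      fun Q _ hQ => sum_splitTerm_eq_zero_of_nontrivial p μ s hanti (hlarge Q hQ),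
    sum_insert (by simp), sum_map, sum_splitTerm_empty]
  simp only [Embedding.coeFn_mk, sum_splitTerm_singleton_eq_zero p μ s hanti, add_zero]

end

theorem Wf_eq_two_pow_mul_Wg_general {R α : Type*} [CommRing R] {k : ℕ}
    (p : Fin k → α × α) (g f : α → α → R) (t : α → R)
    (hrel : ∀ i j : Fin k, i ≠ j → ∀ u v : α,
      (u = (p i).1 ∨ u = (p i).2) → (v = (p j).1 ∨ v = (p j).2) →
      g u v + g v u = -((2 * t u - 1) * (2 * t v - 1)))
    (hf : ∀ u v : α, f u v = g u v - g v u) :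
    Wsum f p = 2 ^ k * Wsum g p := by
  by_cases hk : k = 1
  · subst hk
    rw [Wsum_fin_one, Wsum_fin_one, hf, hf]
    ring
  have hanti : swap f = -f := funext₂ fun u v => by simp [swap, hf]
  calc Wsum f p
      = Wsum (f + rankOne (-1) fun u => 2 * t u - 1) p :=
        (Wsum_add_rankOne hanti _ _ p).symm
    _ = Wsum (fun u v => 2 * g u v) p :=
        Wsum_congr hk fun i j hij u v hu hv => by
          simp only [Pi.add_apply, rankOne, hf]
          linear_combination -hrel i j hij u v hu hv
    _ = 2 ^ k * Wsum g p := Wsum_const_mul 2 g p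

/-- Algebraic form of the key combinatorial lemma (Lemma 1.3 / Lemma A.1):
if `g(u,v) + g(v,u) = −(2t(u)−1)(2t(v)−1)` for labels attached to distinct indices, and
`f(u,v) = g(u,v) − g(v,u)`, then `W_f = 2^k · W_g`. -/
theorem Wf_eq_two_pow_mul_Wg {R α : Type*} [CommRing R] {k : ℕ} (hk : 1 ≤ k)
    (p : Fin k → α × α) (g f : α → α → R) (t : α → R)
    (hrel : ∀ i j : Fin k, i ≠ j → ∀ u v : α,
      (u = (p i).1 ∨ u = (p i).2) → (v = (p j).1 ∨ v = (p j).2) →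
      g u v + g v u = -((2 * t u - 1) * (2 * t v - 1)))
    (hf : ∀ u v : α, f u v = g u v - g v u) :
    Wsum f p = 2 ^ k * Wsum g p :=
  Wf_eq_two_pow_mul_Wg_general p g f t hrel hf
end

section
/- (Coefficient form of Theorem 1.1(2): the relation A^{BKP}(w,z) = ¼(z·A^{KP}(w,−z) − w·A^{KP}(z,−w)) between the generating series of BKP affine coordinates and of the induced KP affine coordinates.) With TwoA_B, P and Q defined as in the context from a family a satisfying a(m,n) = −a(n,m), one has the identity TwoA_B = P − Q in the formal power series ring R[[u,v]]. -/
/-!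
Compare coefficients of `uᵐ vⁿ`. On the axes both sides agree by antisymmetry
`a (0, n) = -a (n, 0)`. Off the axes, antisymmetry also gives
`a (m, 0) * a (0, n) = a (n, 0) * a (0, m)`, so the quadratic corrections in `P` and `Q` cancel
and `P - Q` leaves `a (m, n) - a (n, m) = 2 * a (m, n)`, the coefficient of `TwoA_B`.
-/

theorem Finsupp.single_zero_add_single_one {M : Type*} [AddZeroClass M] (d : Fin 2 →₀ M) :
    single 0 (d 0) + single 1 (d 1) = d := by
  ext i
  fin_cases i <;> simp

theorem MvPowerSeries.ext_fin_two {R : Type*} [Semiring R] {φ ψ : MvPowerSeries (Fin 2) R}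
    (h : ∀ m n : ℕ, coeff (.single 0 m + .single 1 n) φ = coeff (.single 0 m + .single 1 n) ψ) :
    φ = ψ :=
  ext fun d => by simpa only [Finsupp.single_zero_add_single_one] using h (d 0) (d 1)

theorem sub_swap_add_mul_eq_two_mul_of_antisymm {R : Type*} [CommRing R] {a : ℕ × ℕ → R}
    (ha : ∀ m n : ℕ, a (m, n) = - a (n, m)) (m n : ℕ) :
    (a (m, n) + a (m, 0) * a (0, n)) - (a (n, m) + a (n, 0) * a (0, m)) = 2 * a (m, n) := by
  linear_combination -ha n m + a (0, n) * ha m 0 - a (0, m) * ha n 0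

/-- Coefficient form of Theorem 1.1(2): the relation
`A^{BKP}(w,z) = ¼(z·A^{KP}(w,−z) − w·A^{KP}(z,−w))` between the generating series of the
BKP affine coordinates and of the induced KP affine coordinates, stated in the formal power
series ring `R[[u,v]]` (with `u, v` playing the roles of `w⁻¹, z⁻¹`); the series
`TwoA_B` (= twice `A^{BKP}`), `P` (= `½·z·A^{KP}(w,−z)`) and `Q` (= `½·w·A^{KP}(z,−w)`)
are specified by their coefficients, `u` being the variable `0` and `v` the variable `1`. -/
theorem twoA_BKP_eq_P_sub_Q {R : Type*} [CommRing R] (a : ℕ × ℕ → R)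
    (ha : ∀ m n : ℕ, a (m, n) = - a (n, m))
    (TwoA_B P Q : MvPowerSeries (Fin 2) R)
    -- `TwoA_B = Σ_{n≥1, m≥0} (−1)^{m+n+1} a(n,m) uⁿ vᵐ + Σ_{n≥0, m≥1} (−1)^{m+n+1} a(n,m) uⁿ vᵐ`
    (hT : ∀ n m : ℕ,
      MvPowerSeries.coeff (Finsupp.single (0 : Fin 2) n + Finsupp.single (1 : Fin 2) m) TwoA_B
        = (if 1 ≤ n then (-1 : R) ^ (m + n + 1) * a (n, m) else 0)
          + (if 1 ≤ m then (-1 : R) ^ (m + n + 1) * a (n, m) else 0))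
    -- `P = Σ_{m≥1} (−1)^{m+1} a(m,0) uᵐ + Σ_{m≥1, n≥1} (−1)^{m+n+1} (a(m,n) + a(m,0)·a(0,n)) uᵐ vⁿ`
    (hP : ∀ m n : ℕ,
      MvPowerSeries.coeff (Finsupp.single (0 : Fin 2) m + Finsupp.single (1 : Fin 2) n) P
        = (if 1 ≤ m ∧ n = 0 then (-1 : R) ^ (m + 1) * a (m, 0) else 0)
          + (if 1 ≤ m ∧ 1 ≤ n then
              (-1 : R) ^ (m + n + 1) * (a (m, n) + a (m, 0) * a (0, n)) else 0))
    -- `Q = Σ_{n≥1} (−1)^{n+1} a(n,0) vⁿ + Σ_{m≥1, n≥1} (−1)^{m+n+1} (a(n,m) + a(n,0)·a(0,m)) uᵐ vⁿ`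
    (hQ : ∀ m n : ℕ,
      MvPowerSeries.coeff (Finsupp.single (0 : Fin 2) m + Finsupp.single (1 : Fin 2) n) Q
        = (if m = 0 ∧ 1 ≤ n then (-1 : R) ^ (n + 1) * a (n, 0) else 0)
          + (if 1 ≤ m ∧ 1 ≤ n then
              (-1 : R) ^ (m + n + 1) * (a (n, m) + a (n, 0) * a (0, m)) else 0)) :
    TwoA_B = P - Q := by
  refine MvPowerSeries.ext_fin_two fun m n => ?_
  rw [map_sub, hT, hP, hQ]
  rcases m with _ | m <;> rcases n with _ | n
  · simp
  · simp [ha 0]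
  · simp
  · simp only [le_add_iff_nonneg_left, zero_le, and_self, if_true, Nat.succ_ne_zero, and_false,
      if_false, zero_add, false_and]
    linear_combination
      -(-1 : R) ^ (m + n + 3) * sub_swap_add_mul_eq_two_mul_of_antisymm ha (m + 1) (n + 1)
end

section
/- (Swap–reversal parity symmetry of the restricted sum Z̃, the first equality used in (Rsplit).) For any map g : α → α → R and any k ≥ 1, Z̃_g((a_1,b_1), (a_2,b_2), …, (a_k,b_k)) = (−1)^{k−1} · Z̃_g((a_1,b_1), (b_k,a_k), (b_{k−1},a_{k−1}), …, (b_2,a_2)); that is, swapping the two components of each of the pairs numbered 2, …, k and reversing their order multiplies Z̃_g by (−1)^{k−1}. -/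
/-- `Z̃_h((a_1,b_1), …, (a_k,b_k)) = Σ_{ε ∈ {1,−1}^k, ε_1 = 1} Σ_{σ ∈ S'_k} ∏_{i=1}^k
ε_{σ(i)} · h(B_{σ(i)}(ε_{σ(i)}), A_{σ(i+1)}(ε_{σ(i+1)}))`, where `S'_k` is the set
of permutations fixing the first index, and indices are cyclic (`σ(k+1) := σ(1)`). -/
def Ztilde {R α : Type*} [CommRing R] (h : α → α → R) {k : ℕ} (p : Fin k → α × α) : R :=
  ∑ ε ∈ Finset.univ.filter (fun ε : Fin k → Bool => ∀ i : Fin k, (i : ℕ) = 0 → ε i = true),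
    ∑ σ ∈ Finset.univ.filter (fun σ : Equiv.Perm (Fin k) => ∀ i : Fin k, (i : ℕ) = 0 → σ i = i),
      ∏ i : Fin k,
        signR R (ε (σ i)) * h (Bc (p (σ i)) (ε (σ i)))
          (Ac (p (σ (finRotate k i))) (ε (σ (finRotate k i))))

lemma fin_val_zero {m : ℕ} (i : Fin (m+1)) : (i : ℕ) = 0 ↔ i = 0 := by
  constructor
  · intro h; exact Fin.ext (by simp [h])
  · intro h; simp [h]

/-- Flip all signs except at index 0, and reindex by negation. -/
def flipE {k : ℕ} (ε : Fin k → Bool) : Fin k → Bool :=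
  fun i => if (i : ℕ) = 0 then ε i else !(ε (-i))

lemma flipE_invol {m : ℕ} : Function.Involutive (flipE (k := m + 1)) := by
  intro ε
  funext i
  unfold flipE
  by_cases h : (i : ℕ) = 0
  · simp [h]
  · have hi : i ≠ 0 := fun h0 => h (by simp [h0])
    have hni : ((-i : Fin (m+1)) : ℕ) ≠ 0 := by
      simp only [ne_eq, fin_val_zero _, neg_eq_zero]
      exact hi
    simp [h, hni, neg_neg]

lemma negTrans_invol {m : ℕ} :
    Function.Involutive (fun σ : Equiv.Perm (Fin (m+1)) => σ.trans (Equiv.neg (Fin (m+1)))) := by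
  intro σ
  ext i
  simp [Equiv.neg]

lemma prod_if_neg_one {m : ℕ} {R : Type*} [CommRing R] (σ : Equiv.Perm (Fin (m+1))) :
    (∏ i : Fin (m+1), (if ((σ i : ℕ)) = 0 then (1 : R) else -1)) = (-1) ^ m := by
  rw [Equiv.prod_comp σ (fun j => if ((j : ℕ)) = 0 then (1 : R) else -1)]
  rw [Fin.prod_univ_succ]
  simp [Fin.val_succ]

/-- Swap–reversal parity symmetry of the restricted sum `Z̃` (first equality in (Rsplit)):
`Z̃_g((a_1,b_1),(a_2,b_2),…,(a_k,b_k))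
  = (−1)^{k−1} · Z̃_g((a_1,b_1),(b_k,a_k),(b_{k−1},a_{k−1}),…,(b_2,a_2))`.
The reversed-and-swapped tuple keeps the first pair and sends position `i ≠ 1` to the
swap of the pair at position `k + 2 − i`, realized here (0-based) via negation in `Fin k`. -/
theorem Ztilde_swap_reversal {R α : Type*} [CommRing R] {k : ℕ} (hk : 1 ≤ k)
    (p : Fin k → α × α) (g : α → α → R) :
    Ztilde g p =
      (-1 : R) ^ (k - 1) *
        Ztilde g (fun i : Fin k => if (i : ℕ) = 0 then p i else Prod.swap (p (-i))) := by
  obtain ⟨m, rfl⟩ : ∃ m, k = m + 1 := ⟨k - 1, (Nat.succ_pred_eq_of_pos hk).symm⟩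
  set p' : Fin (m+1) → α × α :=
    fun i => if (i : ℕ) = 0 then p i else Prod.swap (p (-i)) with hp'
  simp only [Nat.add_sub_cancel]
  -- key pointwise facts
  have hB : ∀ (ε' : Fin (m+1) → Bool) (j : Fin (m+1)),
      Bc (p' j) (ε' j) = Bc (p (-j)) (flipE ε' (-j)) := by
    intro ε' j
    by_cases h : (j : ℕ) = 0
    · have hj : j = 0 := by simpa [fin_val_zero _] using h
      subst hj
      simp [hp', flipE, Bc]
    · have hj : j ≠ 0 := fun h0 => h (by simp [h0])
      have hnj : ((-j : Fin (m+1)) : ℕ) ≠ 0 := by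
        simp only [ne_eq, fin_val_zero _, neg_eq_zero]; exact hj
      simp only [hp', flipE, if_neg h, if_neg hnj, neg_neg]
      cases ε' j <;> simp [Bc, Ac, Prod.swap]
  have hA : ∀ (ε' : Fin (m+1) → Bool) (j : Fin (m+1)),
      Ac (p' j) (ε' j) = Ac (p (-j)) (flipE ε' (-j)) := by
    intro ε' j
    by_cases h : (j : ℕ) = 0
    · have hj : j = 0 := by simpa [fin_val_zero _] using h
      subst hj
      simp [hp', flipE, Ac]
    · have hj : j ≠ 0 := fun h0 => h (by simp [h0])
      have hnj : ((-j : Fin (m+1)) : ℕ) ≠ 0 := by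
        simp only [ne_eq, fin_val_zero _, neg_eq_zero]; exact hj
      simp only [hp', flipE, if_neg h, if_neg hnj, neg_neg]
      cases ε' j <;> simp [Bc, Ac, Prod.swap]
  have hS : ∀ (ε' : Fin (m+1) → Bool) (j : Fin (m+1)),
      signR R (ε' j) = (if (j : ℕ) = 0 then (1:R) else -1) * signR R (flipE ε' (-j)) := by
    intro ε' j
    by_cases h : (j : ℕ) = 0
    · have hj : j = 0 := by simpa [fin_val_zero _] using h
      subst hj
      simp [flipE, signR]
    · have hnj : ((-j : Fin (m+1)) : ℕ) ≠ 0 := by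
        simp only [ne_eq, fin_val_zero _, neg_eq_zero]
        exact fun h0 => h (by simp [h0])
      simp only [flipE, if_neg h, if_neg hnj, neg_neg]
      cases ε' j <;> simp [signR]
  -- main claim: Ztilde g p' = (-1)^m * Ztilde g p
  have key : Ztilde g p' = (-1 : R) ^ m * Ztilde g p := by
    unfold Ztilde
    rw [Finset.mul_sum]
    refine Finset.sum_equiv (flipE_invol.toPerm) ?_ ?_
    · intro ε'
      simp only [Finset.mem_filter, Finset.mem_univ, true_and,
        Function.Involutive.coe_toPerm]
      constructor
      · intro h i hi
        have hi0 : i = 0 := by simpa [fin_val_zero _] using hi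
        subst hi0
        have := h 0 rfl
        simpa [flipE] using this
      · intro h i hi
        have hi0 : i = 0 := by simpa [fin_val_zero _] using hi
        subst hi0
        have := h 0 rfl
        simpa [flipE] using this
    · intro ε' hε'
      rw [Finset.mul_sum]
      refine Finset.sum_equiv (negTrans_invol.toPerm) ?_ ?_
      · intro σ
        simp only [Finset.mem_filter, Finset.mem_univ, true_and,
          Function.Involutive.coe_toPerm]
        constructor
        · intro h i hi
          have hi0 : i = 0 := by simpa [fin_val_zero _] using hi
          subst hi0
          have := h 0 rfl
          simp [Equiv.neg, this]
        · intro h i hi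
          have hi0 : i = 0 := by simpa [fin_val_zero _] using hi
          subst hi0
          have h0 := h 0 rfl
          simp only [Equiv.trans_apply, Equiv.neg_apply, neg_eq_zero] at h0
          exact h0
      · intro σ hσ
        have hσneg : ∀ i, (Function.Involutive.toPerm _ negTrans_invol σ) i = -(σ i) := by
          intro i
          simp [Function.Involutive.coe_toPerm, Equiv.neg]
        calc (∏ i : Fin (m+1),
              signR R (ε' (σ i)) * g (Bc (p' (σ i)) (ε' (σ i)))
                (Ac (p' (σ (finRotate (m+1) i))) (ε' (σ (finRotate (m+1) i)))))
            = ∏ i : Fin (m+1),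
              (if ((σ i : ℕ)) = 0 then (1:R) else -1) *
              (signR R (flipE ε' (-(σ i))) * g (Bc (p (-(σ i))) (flipE ε' (-(σ i))))
                (Ac (p (-(σ (finRotate (m+1) i)))) (flipE ε' (-(σ (finRotate (m+1) i)))))) := by
              refine Finset.prod_congr rfl fun i _ => ?_
              rw [hB ε' (σ i), hA ε' (σ (finRotate (m+1) i)), hS ε' (σ i)]
              ring
          _ = (∏ i : Fin (m+1), (if ((σ i : ℕ)) = 0 then (1:R) else -1)) *
              ∏ i : Fin (m+1),
              signR R (flipE ε' (-(σ i))) * g (Bc (p (-(σ i))) (flipE ε' (-(σ i))))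
                (Ac (p (-(σ (finRotate (m+1) i)))) (flipE ε' (-(σ (finRotate (m+1) i))))) := by
              rw [Finset.prod_mul_distrib]
          _ = (-1:R)^m * ∏ i : Fin (m+1),
              signR R (flipE ε' (-(σ i))) * g (Bc (p (-(σ i))) (flipE ε' (-(σ i))))
                (Ac (p (-(σ (finRotate (m+1) i)))) (flipE ε' (-(σ (finRotate (m+1) i))))) := by
              rw [prod_if_neg_one σ]
  rw [key, ← mul_assoc, ← mul_pow]
  norm_num
end

section
/- (Anticommutation relations of the hatted neutral fermions and decoupling of the two families.) For all integers m, n one has φ̂_m φ̂_n + φ̂_n φ̂_m = (−1)^m δ_{m+n,0} · 1 and φ_m φ̂_n + φ̂_n φ_m = 0, where δ_{m+n,0} = 1 if m + n = 0 and 0 otherwise. -/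
/-- The neutral fermion `φ_m = (ψ_{−m−1/2} + (−1)^m ψ*_{−m+1/2})/√2`. Here the families
`ψ, ψs : ℤ → A` are indexed so that `ψ n` stands for `ψ_{n + 1/2}` (and likewise for `ψ*`),
so `ψ_{−m−1/2} = ψ (−m−1)` and `ψ*_{−m+1/2} = ψs (−m)`. -/
noncomputable def phi {A : Type*} [Ring A] [Algebra ℂ A] (ψ ψs : ℤ → A) (m : ℤ) : A :=
  ((Real.sqrt 2 : ℂ))⁻¹ • (ψ (-m - 1) + ((-1 : ℂ) ^ m) • ψs (-m))

/-- The hatted neutral fermion `φ̂_m = √(−1)·(ψ_{−m−1/2} − (−1)^m ψ*_{−m+1/2})/√2`,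
with the same indexing convention as `phi`. -/
noncomputable def phiHat {A : Type*} [Ring A] [Algebra ℂ A] (ψ ψs : ℤ → A) (m : ℤ) : A :=
  (Complex.I * (Real.sqrt 2 : ℂ)⁻¹) • (ψ (-m - 1) - ((-1 : ℂ) ^ m) • ψs (-m))

lemma smul_anticomm {A : Type*} [Ring A] [Algebra ℂ A] (k l : ℂ) (x y : A) :
    (k • x) * (l • y) + (l • y) * (k • x) = (k * l) • (x * y + y * x) := by
  rw [smul_mul_smul_comm, smul_mul_smul_comm, mul_comm l k, smul_add]

lemma expand_anticomm {A : Type*} [Ring A] [Algebra ℂ A] (ε η : ℂ) (a b c d : A) :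
    (a + ε • b) * (c + η • d) + (c + η • d) * (a + ε • b)
      = (a * c + c * a) + η • (a * d + d * a) + ε • (b * c + c * b)
        + (ε * η) • (b * d + d * b) := by
  simp only [mul_add, add_mul, mul_smul_comm, smul_mul_assoc, smul_smul, smul_add]
  module

/-- Anticommutation relations of the hatted neutral fermions and decoupling of the two
families: `φ̂_m φ̂_n + φ̂_n φ̂_m = (−1)^m δ_{m+n,0} · 1` and `φ_m φ̂_n + φ̂_n φ_m = 0`.
The canonical anticommutation relations are assumed for the families `ψ, ψs : ℤ → A`,
indexed so that `ψ n` stands for `ψ_{n + 1/2}` (hence `δ_{r+s,0}` becomes the condition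
`r + s + 1 = 0` on the integer indices). -/
theorem phiHat_anticommute_and_decouple {A : Type*} [Ring A] [Algebra ℂ A] (ψ ψs : ℤ → A)
    (h1 : ∀ r s : ℤ, ψ r * ψ s + ψ s * ψ r = 0)
    (h2 : ∀ r s : ℤ, ψs r * ψs s + ψs s * ψs r = 0)
    (h3 : ∀ r s : ℤ, ψ r * ψs s + ψs s * ψ r = if r + s + 1 = 0 then 1 else 0)
    (m n : ℤ) :
    phiHat ψ ψs m * phiHat ψ ψs n + phiHat ψ ψs n * phiHat ψ ψs m =
        (if m + n = 0 then ((-1 : ℂ) ^ m) else 0) • (1 : A) ∧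
      phi ψ ψs m * phiHat ψ ψs n + phiHat ψ ψs n * phi ψ ψs m = 0 := by
  have h2c : ((Real.sqrt 2 : ℝ) : ℂ) * ((Real.sqrt 2 : ℝ) : ℂ) = 2 := by
    norm_cast
    rw [Real.mul_self_sqrt] ; norm_num
  have hδ1 : ψ (-m - 1) * ψs (-n) + ψs (-n) * ψ (-m - 1)
      = if m + n = 0 then (1 : A) else 0 := by
    rw [h3]
    simp only [show ((-m - 1) + (-n) + 1 = 0) ↔ (m + n = 0) by omega]
  have hδ2 : ψs (-m) * ψ (-n - 1) + ψ (-n - 1) * ψs (-m)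
      = if m + n = 0 then (1 : A) else 0 := by
    rw [add_comm, h3]
    simp only [show ((-n - 1) + (-m) + 1 = 0) ↔ (m + n = 0) by omega]
  have hsub : ∀ k : ℤ, ψ (-k - 1) - ((-1 : ℂ) ^ k) • ψs (-k)
      = ψ (-k - 1) + (-((-1 : ℂ) ^ k)) • ψs (-k) := fun k => by
    rw [neg_smul, sub_eq_add_neg]
  have hε : m + n = 0 → ((-1 : ℂ)) ^ n = (-1 : ℂ) ^ m := by
    intro h
    have : n = -m := by omega
    subst this
    rw [zpow_neg, ← inv_zpow, inv_neg, inv_one]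
  constructor
  · rw [phiHat, phiHat, hsub, hsub, smul_anticomm, expand_anticomm, h1, h2, hδ1, hδ2]
    have hk : Complex.I * ((Real.sqrt 2 : ℝ) : ℂ)⁻¹ * (Complex.I * ((Real.sqrt 2 : ℝ) : ℂ)⁻¹)
        = -(1/2 : ℂ) := by
      rw [show Complex.I * ((Real.sqrt 2 : ℝ) : ℂ)⁻¹ * (Complex.I * ((Real.sqrt 2 : ℝ) : ℂ)⁻¹)
          = (Complex.I * Complex.I) * (((Real.sqrt 2 : ℝ) : ℂ) * ((Real.sqrt 2 : ℝ) : ℂ))⁻¹ by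
        rw [mul_inv]; ring, Complex.I_mul_I, h2c]
      norm_num
    by_cases h : m + n = 0
    · rw [if_pos h, hε h]
      simp only [smul_zero, add_zero, zero_add, ← add_smul, smul_smul, hk]
      congr 1
      rw [if_pos h]
      ring
    · rw [if_neg h, if_neg h]
      simp
  · rw [phi, phiHat, hsub, smul_anticomm, expand_anticomm, h1, h2, hδ1, hδ2]
    by_cases h : m + n = 0
    · rw [if_pos h, hε h]
      simp
    · rw [if_neg h]
      simp
end
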